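/- (Gentle operator lemma) If ρ is a subnormalized density operator (ρ ≥ 0, Tr ρ ≤ 1) and Λ is an operator with 0 ≤ Λ ≤ I satisfying Tr(ρΛ) ≥ 1 − λ, then ‖ρ − √Λ ρ √Λ‖₁ ≤ √(8λ). -/

import Mathlib

open Matrix Kronecker BigOperators ComplexOrder

/-- The positive semidefinite square root (as in the older Mathlib's `Matrix.PosSemidef.sqrt`). -/
noncomputable def Matrix.PosSemidef.sqrt {n 𝕜 : Type*} [Fintype n] [RCLike 𝕜] [DecidableEq n]
    {A : Matrix n n 𝕜} (hA : A.PosSemidef) : Matrix n n 𝕜 :=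
  hA.1.eigenvectorUnitary.1 * diagonal ((↑) ∘ (√·) ∘ hA.1.eigenvalues) *
    (star hA.1.eigenvectorUnitary : Matrix n n 𝕜)

/-- Trace norm `‖A‖₁ = Tr √(Aᴴ A)`. -/
noncomputable def traceNorm {n : Type*} [Fintype n] [DecidableEq n]
    (A : Matrix n n ℂ) : ℝ :=
  ((Matrix.posSemidef_conjTranspose_mul_self A).sqrt.trace).re

/-- Von Neumann entropy (base 2), via eigenvalues; `0` for non-Hermitian input. -/
noncomputable def vnEntropy {n : Type*} [Fintype n] [DecidableEq n]
    (ρ : Matrix n n ℂ) : ℝ :=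
  if h : ρ.IsHermitian then
    -∑ i, (h.eigenvalues i) * Real.logb 2 (h.eigenvalues i)
  else 0

/-- A density operator: positive semidefinite with unit trace. -/
def IsDensity {n : Type*} [Fintype n] (ρ : Matrix n n ℂ) : Prop :=
  ρ.PosSemidef ∧ ρ.trace = 1

/-- Rank-one projector `|v⟩⟨v|`. -/
noncomputable def proj {n : Type*} (v : n → ℂ) : Matrix n n ℂ :=
  Matrix.vecMulVec v (star v)

/-- Partial trace over the second tensor factor. -/
noncomputable def ptraceSnd {a b : Type*} [Fintype b]
    (ρ : Matrix (a × b) (a × b) ℂ) : Matrix a a ℂ :=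
  Matrix.of fun i j => ∑ k, ρ (i, k) (j, k)

/-- Partial trace over the first tensor factor. -/
noncomputable def ptraceFst {a b : Type*} [Fintype a]
    (ρ : Matrix (a × b) (a × b) ℂ) : Matrix b b ℂ :=
  Matrix.of fun i j => ∑ k, ρ (k, i) (k, j)

/-- Quantum mutual information `I(A;B) = H(A) + H(B) − H(AB)`. -/
noncomputable def mutualInfo {a b : Type*} [Fintype a] [Fintype b]
    [DecidableEq a] [DecidableEq b] (ρ : Matrix (a × b) (a × b) ℂ) : ℝ :=
  vnEntropy (ptraceSnd ρ) + vnEntropy (ptraceFst ρ) - vnEntropy ρ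

/-- `n`-fold tensor power of a matrix. -/
noncomputable def tpow {d : ℕ} (ρ : Matrix (Fin d) (Fin d) ℂ) (n : ℕ) :
    Matrix (Fin n → Fin d) (Fin n → Fin d) ℂ :=
  Matrix.of fun f g => ∏ i, ρ (f i) (g i)

/-- The cq state obtained by measuring the `A` part of a bipartite state with POVM `Λ`:
`ρ^{XB} = Σ_x |x⟩⟨x| ⊗ Tr_A((Λ_x ⊗ I)ρ)`. -/
noncomputable def measureA {a b m : Type*} [Fintype a] [DecidableEq m]
    (Λ : m → Matrix a a ℂ) (ρ : Matrix (a × b) (a × b) ℂ) :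
    Matrix (m × b) (m × b) ℂ :=
  Matrix.of fun xi yj =>
    if xi.1 = yj.1 then ∑ k, ∑ l, (Λ xi.1) k l * ρ (l, xi.2) (k, yj.2) else 0

/-- Unitarity for (possibly rectangular between index types) matrices. -/
def IsUnitaryMat {p q : Type*} [Fintype p] [Fintype q] [DecidableEq p] [DecidableEq q]
    (U : Matrix p q ℂ) : Prop :=
  U * Uᴴ = 1 ∧ Uᴴ * U = 1

/-!
Put `S = √Λ` and `T = 1 - S`, so that `ρ - SρS = Tρ + SρT`. The trace norm of the Hermitian
matrix `X = ρ - SρS` is `Re Tr (u X)` for the unitary `u = sign X`, and both resulting terms are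
bounded by Cauchy–Schwarz for the semi-inner product `⟪x, y⟫ = Tr (y ρ xᴴ)`. Every factor is at
most `1` except `Tr (T ρ T) ≤ Tr ((1 - Λ) ρ) ≤ λ`, which holds because `(1 - √Λ)² ≤ 1 - Λ`
whenever `0 ≤ Λ ≤ 1`. Hence `‖ρ - SρS‖₁ ≤ 2 √λ ≤ √(8λ)`.
-/

open scoped MatrixOrder Matrix.Norms.L2Operator

namespace CFC

variable {A : Type*} [CStarAlgebra A] [PartialOrder A] [StarOrderedRing A]

lemma one_sub_sqrt_sq_le {a : A} (ha₀ : 0 ≤ a) (ha₁ : a ≤ 1) : (1 - sqrt a) ^ 2 ≤ 1 - a := by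
  set s := sqrt a
  have hs₁ : s ≤ 1 := sqrt_one (A := A) ▸ sqrt_le_sqrt a 1 ha₁
  have hss : s * s = a := sqrt_mul_sqrt_self a
  have hconj {r : A} (hr : r * r = s) : r * (1 - s) * r = s - a := by
    rw [← hss, ← hr]; noncomm_ring
  have hsa : 0 ≤ s - a :=
    hconj (sqrt_mul_sqrt_self s) ▸ conjugate_nonneg_of_nonneg (sub_nonneg.mpr hs₁) (sqrt_nonneg s)
  have hdiff : 1 - a - (1 - s) ^ 2 = (s - a) + (s - a) := by
    rw [← hss]; noncomm_ring
  exact sub_nonneg.mp (hdiff ▸ add_nonneg hsa hsa)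

end CFC

namespace Matrix

variable {n 𝕜 : Type*} [Fintype n] [RCLike 𝕜]

lemma PosSemidef.trace_mul_nonneg {A B : Matrix n n 𝕜} (hA : A.PosSemidef) (hB : B.PosSemidef) :
    0 ≤ (A * B).trace := by
  classical
  have hsqrt : (CFC.sqrt A).PosSemidef := (CFC.sqrt_nonneg A).posSemidef
  have hconj := (hB.mul_mul_conjTranspose_same (CFC.sqrt A)).trace_nonneg
  rwa [hsqrt.1.eq, trace_mul_cycle, CFC.sqrt_mul_sqrt_self A hA.nonneg] at hconj

lemma PosSemidef.re_trace_mul_mul_conjTranspose_le {M : Matrix n n 𝕜} (hM : M.PosSemidef)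
    (x y : Matrix n n 𝕜) :
    RCLike.re (y * M * xᴴ).trace ≤
      √(RCLike.re (x * M * xᴴ).trace) * √(RCLike.re (y * M * yᴴ).trace) := by
  let := M.toMatrixSeminormedAddCommGroup hM
  let := M.toMatrixInnerProductSpace hM
  have hnorm (z : Matrix n n 𝕜) : √(RCLike.re (z * M * zᴴ).trace) = ‖z‖ :=
    (norm_eq_sqrt_re_inner (𝕜 := 𝕜) z).symm
  rw [hnorm, hnorm]
  exact (RCLike.re_le_norm _).trans (norm_inner_le_norm (𝕜 := 𝕜) x y)

variable [DecidableEq n]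

lemma PosSemidef.sqrt_eq_cfcSqrt {A : Matrix n n 𝕜} (hA : A.PosSemidef) :
    hA.sqrt = CFC.sqrt A := by
  rw [CFC.sqrt_eq_cfc, cfc_nnreal_eq_real _ A, hA.1.cfc_eq]
  simp [IsHermitian.cfc, Matrix.PosSemidef.sqrt, Function.comp_def,
    max_eq_left (hA.eigenvalues_nonneg _)]

lemma IsHermitian.exists_unitary_mul_eq_abs {A : Matrix n n 𝕜} (hA : A.IsHermitian) :
    ∃ u ∈ unitary (Matrix n n 𝕜), u * A = CFC.abs A := by
  let sign : ℝ → ℝ := fun x => if 0 ≤ x then 1 else -1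
  have hsign : ContinuousOn sign (spectrum ℝ A) := A.finite_real_spectrum.continuousOn _
  refine ⟨cfc sign A, ?_, ?_⟩
  · rw [cfc_unitary_iff sign A]
    intro x _
    by_cases hx : 0 ≤ x <;> simp [sign, hx]
  · rw [CFC.abs_eq_cfc_norm A]
    nth_rw 2 [← cfc_id' ℝ A]
    rw [← cfc_mul sign _ A]
    refine cfc_congr fun x _ => ?_
    by_cases hx : 0 ≤ x <;> simp [sign, hx, abs_of_nonneg, abs_of_neg, not_le.mp]

lemma trace_star_mul_mul_of_mem_unitary {u : Matrix n n 𝕜} (hu : u ∈ unitary (Matrix n n 𝕜))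
    (A : Matrix n n 𝕜) : (star u * A * u).trace = A.trace := by
  rw [trace_mul_cycle, Unitary.mul_star_self_of_mem hu, one_mul]

lemma PosSemidef.re_trace_unitary_mul_sub_conj_le {ρ S u : Matrix n n 𝕜} (hρ : ρ.PosSemidef)
    (hS : S.IsHermitian) (hu : u ∈ unitary (Matrix n n 𝕜)) :
    RCLike.re (u * (ρ - S * ρ * S)).trace ≤
      √(RCLike.re ρ.trace) * √(RCLike.re ((1 - S) * ρ * (1 - S)).trace) +
        √(RCLike.re ((1 - S) * ρ * (1 - S)).trace) * √(RCLike.re (S * ρ * S).trace) := by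
  set T := 1 - S
  have hT : Tᴴ = T := by simp [T, hS.eq]
  have hu' : (star u)ᴴ = u := by rw [← star_eq_conjTranspose, star_star]
  have hsplit : (u * (ρ - S * ρ * S)).trace =
      (T * ρ * (star u)ᴴ).trace + (S * ρ * (star u * T)ᴴ).trace := by
    have h : u * (ρ - S * ρ * S) = u * (T * ρ) + u * (S * ρ * T) := by simp only [T]; noncomm_ring
    rw [h, trace_add, trace_mul_comm u, trace_mul_comm u, conjTranspose_mul, hT, hu',
      mul_assoc (S * ρ)]
  have hfirst : (star u * ρ * (star u)ᴴ).trace = ρ.trace := by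
    rw [hu', trace_star_mul_mul_of_mem_unitary hu]
  have hsecond : (star u * T * ρ * (star u * T)ᴴ).trace = (T * ρ * T).trace := by
    rw [conjTranspose_mul, hT, hu']
    simpa only [mul_assoc] using trace_star_mul_mul_of_mem_unitary hu (T * ρ * T)
  rw [hsplit, map_add]
  refine add_le_add ?_ ?_
  · have h := hρ.re_trace_mul_mul_conjTranspose_le (star u) T
    rwa [hfirst, hT] at h
  · have h := hρ.re_trace_mul_mul_conjTranspose_le (star u * T) S
    rwa [hsecond, hS.eq] at h

lemma PosSemidef.re_trace_one_sub_sqrt_conj_le {ρ Λ : Matrix n n ℂ} (hρ : ρ.PosSemidef)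
    (hΛ₀ : Λ.PosSemidef) (hΛ₁ : (1 - Λ).PosSemidef) :
    ((1 - CFC.sqrt Λ) * ρ * (1 - CFC.sqrt Λ)).trace.re ≤ ρ.trace.re - (ρ * Λ).trace.re := by
  set T := 1 - CFC.sqrt Λ
  have hle : T ^ 2 ≤ 1 - Λ := CFC.one_sub_sqrt_sq_le hΛ₀.nonneg (le_iff.mpr hΛ₁)
  have hnonneg := (sub_nonneg.mpr hle).posSemidef.trace_mul_nonneg hρ
  have hexpand : ((1 - Λ - T ^ 2) * ρ).trace = ρ.trace - (ρ * Λ).trace - (T * ρ * T).trace := by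
    rw [sub_mul, sub_mul, one_mul, trace_sub, trace_sub, trace_mul_comm Λ, sq,
      trace_mul_cycle T ρ T]
  rw [hexpand] at hnonneg
  simpa [sub_nonneg] using (Complex.nonneg_iff.mp hnonneg).1

end Matrix

theorem traceNorm_eq_re_trace_abs {n : Type*} [Fintype n] [DecidableEq n] (A : Matrix n n ℂ) :
    traceNorm A = (CFC.abs A).trace.re := by
  rw [traceNorm, Matrix.PosSemidef.sqrt_eq_cfcSqrt]; rfl

theorem gentle_operator {n : Type*} [Fintype n] [DecidableEq n]
    (ρ Λ : Matrix n n ℂ) (l : ℝ)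
    (hρ : ρ.PosSemidef) (hρ1 : ρ.trace.re ≤ 1)
    (hΛ : Λ.PosSemidef) (hΛ1 : (1 - Λ).PosSemidef)
    (h : 1 - l ≤ (ρ * Λ).trace.re) :
    traceNorm (ρ - hΛ.sqrt * ρ * hΛ.sqrt) ≤ Real.sqrt (8 * l) := by
  rw [hΛ.sqrt_eq_cfcSqrt]
  set S := CFC.sqrt Λ
  have hS : S.IsHermitian := (CFC.sqrt_nonneg Λ).posSemidef.1
  have hX : (ρ - S * ρ * S).IsHermitian := by simp [IsHermitian, hρ.1.eq, hS.eq, mul_assoc]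
  obtain ⟨u, hu, hu_abs⟩ := hX.exists_unitary_mul_eq_abs
  have hρΛ : (ρ * Λ).trace.re ≤ ρ.trace.re := by
    simpa [mul_sub, trace_sub] using (Complex.nonneg_iff.mp (hρ.trace_mul_nonneg hΛ1)).1
  have hT : ((1 - S) * ρ * (1 - S)).trace.re ≤ l := by
    linarith [hρ.re_trace_one_sub_sqrt_conj_le hΛ hΛ1]
  have hSρS : (S * ρ * S).trace.re ≤ 1 := by
    rw [trace_mul_cycle, CFC.sqrt_mul_sqrt_self Λ hΛ.nonneg, trace_mul_comm]
    linarith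
  have hl : 0 ≤ l := by linarith
  calc traceNorm (ρ - S * ρ * S) = (u * (ρ - S * ρ * S)).trace.re := by
        rw [traceNorm_eq_re_trace_abs, hu_abs]
    _ ≤ √ρ.trace.re * √((1 - S) * ρ * (1 - S)).trace.re +
          √((1 - S) * ρ * (1 - S)).trace.re * √(S * ρ * S).trace.re :=
        hρ.re_trace_unitary_mul_sub_conj_le hS hu
    _ ≤ 1 * √l + √l * 1 := by
        gcongr <;> exact Real.sqrt_le_one.mpr ‹_›
    _ ≤ √(8 * l) := by
        rw [Real.le_sqrt (by positivity) (by positivity)]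
        nlinarith [Real.sq_sqrt hl]
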